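/- Let 0 < α < 1/2 and c ≥ 0, and let N : ℕ → ℕ satisfy N(d) > d for all d and |N(d) - 2d| ≤ c·d^α for all sufficiently large d. Then P_{d,N(d)} → 1/2 as d → ∞. -/

import Mathlib

open Filter Finset Real Topology

/-- The Wendel probability `P_{d,N} = 2^{1-N} · Σ_{i=0}^{d-1} C(N-1, i)`. -/
noncomputable def wendelP (d N : ℕ) : ℝ :=
  (∑ i ∈ Finset.range d, ((N - 1).choose i : ℝ)) / 2 ^ (N - 1)

lemma centralBinom_sq_mul_le (m : ℕ) :
    Nat.centralBinom m ^ 2 * (2 * m + 1) ≤ 16 ^ m := by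
  induction m with
  | zero => simp [Nat.centralBinom]
  | succ m ih =>
    have key := Nat.succ_mul_centralBinom_succ m
    have h1 : (m + 1) ^ 2 * (Nat.centralBinom (m+1) ^ 2 * (2*(m+1)+1))
        ≤ (m+1)^2 * 16 ^ (m+1) := by
      have e : (m+1)^2 * (Nat.centralBinom (m+1) ^ 2 * (2*(m+1)+1))
          = (2*(2*m+1))^2 * Nat.centralBinom m ^2 * (2*(m+1)+1) := by
        have := congrArg (· ^ 2) key
        simp only [mul_pow] at this
        nlinarith [this]
      rw [e]
      calc (2*(2*m+1))^2 * Nat.centralBinom m ^2 * (2*(m+1)+1)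
          = 4*(2*m+1)*(2*(m+1)+1) * (Nat.centralBinom m ^2 * (2*m+1)) := by ring
        _ ≤ 4*(2*m+1)*(2*(m+1)+1) * 16 ^ m := Nat.mul_le_mul_left _ ih
        _ ≤ (m+1)^2*16 * 16 ^ m := by
            apply Nat.mul_le_mul_right
            nlinarith
        _ = (m+1)^2 * 16 ^ (m+1) := by rw [pow_succ]; ring
    exact Nat.le_of_mul_le_mul_left h1 (by positivity)

lemma choose_sq_le (n i : ℕ) : n.choose i ^ 2 * (n + 1) ≤ 4 ^ n := by
  have h := Nat.choose_le_middle i n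
  rcases Nat.even_or_odd n with ⟨m, hm⟩ | ⟨m, hm⟩
  · subst hm
    have hh : (m + m) / 2 = m := by omega
    rw [hh] at h
    have hc : (m+m).choose m = Nat.centralBinom m := by
      rw [Nat.centralBinom]; ring_nf
    rw [hc] at h
    calc (m+m).choose i ^ 2 * (m+m+1) ≤ Nat.centralBinom m ^ 2 * (2*m+1) := by
          have := Nat.pow_le_pow_left h 2
          have : (m+m).choose i ^2 ≤ Nat.centralBinom m ^ 2 := this
          nlinarith
      _ ≤ 16 ^ m := centralBinom_sq_mul_le m
      _ = 4 ^ (m+m) := by rw [show (16:ℕ) = 4^2 by norm_num, ← pow_mul]; ring_nf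
  · subst hm
    have hh : (2*m+1) / 2 = m := by omega
    rw [hh] at h
    have h2 : 2 * (2*m+1).choose m = Nat.centralBinom (m+1) := by
      rw [Nat.centralBinom, show 2*(m+1) = (2*m+1)+1 by ring, Nat.choose_succ_succ,
        Nat.choose_symm_half]
      ring
    have hcb := centralBinom_sq_mul_le (m+1)
    have h4 : 4 * ((2*m+1).choose i ^2 * (2*m+1+1)) ≤ 4 * 4 ^ (2*m+1) := by
      calc 4 * ((2*m+1).choose i ^2 * (2*m+1+1))
          ≤ 4 * ((2*m+1).choose m ^2 * (2*m+2)) := by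
            have := Nat.pow_le_pow_left h 2
            nlinarith
        _ = (2 * (2*m+1).choose m)^2 * (2*m+2) := by ring
        _ = Nat.centralBinom (m+1) ^2 * (2*m+2) := by rw [h2]
        _ ≤ Nat.centralBinom (m+1) ^2 * (2*(m+1)+1) := by
            apply Nat.mul_le_mul_left; omega
        _ ≤ 16 ^ (m+1) := hcb
        _ = 4 * 4 ^ (2*m+1) := by
            rw [show (16:ℕ) = 4^2 by norm_num, ← pow_mul]; ring
    exact Nat.le_of_mul_le_mul_left h4 (by norm_num)


lemma sum_choose_reflect (n : ℕ) : ∀ k, k ≤ n + 1 →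
    (∑ i ∈ range k, n.choose i) + ∑ i ∈ range (n + 1 - k), n.choose i = 2 ^ n := by
  intro k
  induction k with
  | zero => simp [Nat.sum_range_choose]
  | succ k ih =>
    intro hk
    have hk' : k ≤ n := by omega
    have ih' := ih (by omega)
    rw [show n + 1 - k = (n - k) + 1 by omega, Finset.sum_range_succ] at ih'
    rw [Finset.sum_range_succ, show n + 1 - (k+1) = n - k by omega]
    have hsymm : n.choose (n - k) = n.choose k := Nat.choose_symm hk'
    omega

lemma choose_le_real (n i : ℕ) : (n.choose i : ℝ) ≤ 2 ^ n / Real.sqrt (n + 1) := by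
  have hs : (0:ℝ) < Real.sqrt (n + 1) := Real.sqrt_pos.2 (by positivity)
  rw [le_div_iff₀ hs]
  have hsq : ((n.choose i : ℝ)) ^ 2 * (n + 1) ≤ 4 ^ n := by
    exact_mod_cast choose_sq_le n i
  have h2 := Real.sqrt_le_sqrt hsq
  rwa [Real.sqrt_mul (sq_nonneg _), Real.sqrt_sq (by positivity),
    show (4:ℝ) ^ n = (2 ^ n) ^ 2 by rw [← pow_mul, pow_mul']; norm_num,
    Real.sqrt_sq (by positivity)] at h2

lemma wendel_bound (d N : ℕ) (hd : 0 < d) (hdN : d < N) :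
    |wendelP d N - 1/2| ≤ |(N:ℝ) - 2*d| / (2 * Real.sqrt d) := by
  obtain ⟨n, rfl⟩ : ∃ n, N = n + 1 := ⟨N - 1, by omega⟩
  have hdn : d ≤ n + 1 := by omega
  set A : ℝ := ∑ i ∈ range d, (n.choose i : ℝ) with hA
  set B : ℝ := ∑ i ∈ range (n + 1 - d), (n.choose i : ℝ) with hB
  have hAB : A + B = 2 ^ n := by
    have h := sum_choose_reflect n d hdn
    rw [hA, hB]; exact_mod_cast h
  have hwp : wendelP d (n+1) = A / 2 ^ n := by simp [wendelP, hA]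
  set M : ℝ := 2 ^ n / Real.sqrt (n + 1) with hM
  have hkey : |A - B| ≤ |((n:ℝ)+1) - 2*d| * M := by
    rcases le_or_gt d (n + 1 - d) with h | h
    · have hBA : B - A = ∑ i ∈ Ico d (n + 1 - d), (n.choose i : ℝ) :=
        (Finset.sum_Ico_eq_sub _ h).symm
      have hle : ∑ i ∈ Ico d (n + 1 - d), (n.choose i : ℝ)
          ≤ (Finset.card (Ico d (n + 1 - d))) • M :=
        Finset.sum_le_card_nsmul _ _ _ (fun i _ => choose_le_real n i)
      have h0 : (0:ℝ) ≤ B - A := by rw [hBA]; positivity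
      rw [Nat.card_Ico, nsmul_eq_mul] at hle
      have e' : ((n + 1 - d - d : ℕ):ℝ) + 2*d = (n:ℝ) + 1 := by
        exact_mod_cast congrArg (fun x : ℕ => (x:ℝ)) (by omega :
          (n + 1 - d - d) + 2*d = n + 1)
      have hnn : (0:ℝ) ≤ ((n + 1 - d - d : ℕ):ℝ) := Nat.cast_nonneg _
      have hcast : ((n + 1 - d - d : ℕ) : ℝ) = |((n:ℝ)+1) - 2*d| := by
        rw [abs_of_nonneg (by linarith)]
        linarith
      rw [abs_sub_comm, abs_of_nonneg h0, hBA, ← hcast]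
      exact hle
    · have h' : n + 1 - d ≤ d := le_of_lt h
      have hBA : A - B = ∑ i ∈ Ico (n + 1 - d) d, (n.choose i : ℝ) :=
        (Finset.sum_Ico_eq_sub _ h').symm
      have hle : ∑ i ∈ Ico (n + 1 - d) d, (n.choose i : ℝ)
          ≤ (Finset.card (Ico (n + 1 - d) d)) • M :=
        Finset.sum_le_card_nsmul _ _ _ (fun i _ => choose_le_real n i)
      have h0 : (0:ℝ) ≤ A - B := by rw [hBA]; positivity
      rw [Nat.card_Ico, nsmul_eq_mul] at hle
      have e' : ((d - (n + 1 - d) : ℕ):ℝ) = 2*d - ((n:ℝ) + 1) := by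
        have : ((d - (n + 1 - d) : ℕ):ℝ) + ((n:ℝ)+1) = 2*d := by
          exact_mod_cast congrArg (fun x : ℕ => (x:ℝ)) (by omega :
            (d - (n + 1 - d)) + (n + 1) = 2*d)
        linarith
      have hnn : (0:ℝ) ≤ ((d - (n + 1 - d) : ℕ):ℝ) := Nat.cast_nonneg _
      have hcast : ((d - (n + 1 - d) : ℕ) : ℝ) = |((n:ℝ)+1) - 2*d| := by
        rw [abs_of_nonpos (by linarith)]
        linarith
      rw [abs_of_nonneg h0, hBA, ← hcast]
      exact hle
  have h2n : (0:ℝ) < 2 ^ n := by positivity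
  have heq : wendelP d (n+1) - 1/2 = (A - B) / (2 * 2^n) := by
    rw [hwp]; field_simp; linear_combination hAB
  rw [heq, abs_div, abs_of_pos (by positivity : (0:ℝ) < 2 * 2^n)]
  have hsle : Real.sqrt d ≤ Real.sqrt (n + 1) := by
    apply Real.sqrt_le_sqrt; exact_mod_cast hdn
  have hsd : (0:ℝ) < Real.sqrt d := Real.sqrt_pos.2 (by exact_mod_cast hd)
  have hsn : (0:ℝ) < Real.sqrt (n + 1) := by positivity
  calc |A - B| / (2 * 2^n) ≤ (|((n:ℝ)+1) - 2*d| * M) / (2 * 2^n) := by gcongr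
    _ = |((n:ℝ)+1) - 2*d| / (2 * Real.sqrt (n+1)) := by
        rw [hM]; field_simp
    _ ≤ |((n:ℝ)+1) - 2*d| / (2 * Real.sqrt d) := by gcongr
    _ = |((n+1:ℕ):ℝ) - 2*d| / (2 * Real.sqrt d) := by push_cast; ring_nf

theorem wendel_tendsto_half_subcritical (α c : ℝ) (hα1 : 0 < α) (hα2 : α < 1 / 2)
    (hc : 0 ≤ c) (N : ℕ → ℕ) (hN : ∀ d, d < N d)
    (h1 : ∀ᶠ d : ℕ in atTop, |(N d : ℝ) - 2 * d| ≤ c * (d : ℝ) ^ α) :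
    Tendsto (fun d : ℕ => wendelP d (N d)) atTop (𝓝 (1 / 2)) := by
  have hbound : ∀ᶠ d : ℕ in atTop,
      |wendelP d (N d) - 1/2| ≤ (c/2) * (d:ℝ) ^ (α - 1/2) := by
    filter_upwards [h1, eventually_ge_atTop 1] with d hd1 hd2
    have hdpos : (0:ℝ) < d := by exact_mod_cast hd2
    have hsd : (0:ℝ) < Real.sqrt d := Real.sqrt_pos.2 hdpos
    calc |wendelP d (N d) - 1/2|
        ≤ |(N d : ℝ) - 2*d| / (2 * Real.sqrt d) := wendel_bound d (N d) hd2 (hN d)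
      _ ≤ (c * (d:ℝ) ^ α) / (2 * Real.sqrt d) := by gcongr
      _ = (c/2) * (d:ℝ) ^ (α - 1/2) := by
          rw [Real.sqrt_eq_rpow, Real.rpow_sub hdpos]
          field_simp
  have hlim : Tendsto (fun d : ℕ => (c/2) * (d:ℝ) ^ (α - 1/2)) atTop (𝓝 0) := by
    have h0 : Tendsto (fun x : ℝ => x ^ (α - 1/2)) atTop (𝓝 0) := by
      have := tendsto_rpow_neg_atTop (y := 1/2 - α) (by linarith)
      simpa [neg_sub] using this
    have := (h0.comp tendsto_natCast_atTop_atTop).const_mul (c/2)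
    simpa using this
  have habs : Tendsto (fun d : ℕ => |wendelP d (N d) - 1/2|) atTop (𝓝 0) :=
    squeeze_zero' (Eventually.of_forall fun d => abs_nonneg _) hbound hlim
  have hsub : Tendsto (fun d : ℕ => wendelP d (N d) - 1/2) atTop (𝓝 0) :=
    tendsto_zero_iff_abs_tendsto_zero _ |>.2 habs
  have := hsub.add (tendsto_const_nhds (x := (1/2 : ℝ)))
  simpa using this
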